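/- arXiv:1811.05676 — 4 statements merged into one kernel-verified Lean document; each statement's English description precedes it below -/
import Mathlib

section
/- Let N be a prime number and ∅ ≠ u ⊆ {1,…,s}. Define ē²_u(N) := (1/N²) ∑_{k=0}^{N-1} ∑_{k'=0}^{N-1} (X_{N;k,k'} + J_{N;k,k'})^{|u|}, where X_{N;k,k'} := (1/(2(N-1))) ∑_{z=1}^{N-1} B₂({(k-k')z/N}) and J_{N;k,k'} := (1/(N-1)) ∑_{z=1}^{N-1} ({kz/N} - 1/2)({k'z/N} - 1/2). Then ē²_u(N) ≤ c_u/N + (1/N²) ∑_{k=1}^{N-1} ∑_{k'=1}^{N-1} (J_{N;k,k'})^{|u|}, where c_u := 2/3^{|u|} + 1/4^{|u|}. -/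
open Finset Real Filter

/-- The Bernoulli polynomial of degree 2, `B₂(t) = t² - t + 1/6`. -/
noncomputable def B2 (t : ℝ) : ℝ := t ^ 2 - t + 1 / 6

/-- `X_{N;k,k'} = (1/(2(N-1))) ∑_{z=1}^{N-1} B₂({(k-k')z/N})`. -/
noncomputable def Xq (N k k' : ℕ) : ℝ :=
  (1 / (2 * ((N : ℝ) - 1))) *
    ∑ z ∈ Finset.Icc 1 (N - 1), B2 (Int.fract ((((k : ℝ) - (k' : ℝ)) * z) / N))

/-- `J_{N;k,k'} = (1/(N-1)) ∑_{z=1}^{N-1} ({kz/N} - 1/2)({k'z/N} - 1/2)`. -/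
noncomputable def Jq (N k k' : ℕ) : ℝ :=
  (1 / ((N : ℝ) - 1)) *
    ∑ z ∈ Finset.Icc 1 (N - 1),
      (Int.fract ((k : ℝ) * z / N) - 1 / 2) * (Int.fract ((k' : ℝ) * z / N) - 1 / 2)

/-!
Because `N` is prime, `z ↦ cz mod N` permutes `{1, …, N-1}` whenever `N ∤ c`, so the sums
defining `X` and `J` reduce to explicit sums over `a / N`: `X = 1/12` on the diagonal and
`-1/(12N)` off it, `J` vanishes on the row and column `k = 0`, equals `(N-2)/(12N)` on the
diagonal, and is at most `(1/2 - 1/N)²` in absolute value elsewhere, since then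
`{kz/N} ∈ [1/N, 1 - 1/N]`. Off the diagonal `X + J` and `J` therefore lie in `[-1/4, 1/4]`, so by
the mean value bound adding `X` changes `J^m` by at most `m 4^(1-m) / (12N)`. By Bernoulli's
inequality the `(N-1)²` such entries cost at most `N / 3^m`, the corner with the zero row and
column another `N / 3^m`, and the diagonal `N / 4^m`.
-/

lemma sum_Icc_natCast (n : ℕ) : ∑ a ∈ Icc 1 n, (a : ℝ) = n * (n + 1) / 2 := by
  induction n with
  | zero => simp
  | succ n ih => rw [sum_Icc_succ_top (by omega), ih]; push_cast; ring

lemma sum_Icc_natCast_sq (n : ℕ) :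
    ∑ a ∈ Icc 1 n, (a : ℝ) ^ 2 = n * (n + 1) * (2 * n + 1) / 6 := by
  induction n with
  | zero => simp
  | succ n ih => rw [sum_Icc_succ_top (by omega), ih]; push_cast; ring

lemma neg_pow_le_pow {R : Type*} [Ring R] [LinearOrder R] [IsStrictOrderedRing R] {a : R}
    (ha : 0 ≤ a) (n : ℕ) : (-a) ^ n ≤ a ^ n :=
  (le_abs_self _).trans_eq (by rw [abs_pow, abs_neg, abs_of_nonneg ha])

lemma sum_range_sum_range_eq {M : Type*} [AddCommMonoid M] {N : ℕ} (hN : 0 < N)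
    (F : ℕ → ℕ → M) :
    ∑ k ∈ range N, ∑ k' ∈ range N, F k k' = F 0 0 + ∑ k' ∈ Icc 1 (N - 1), F 0 k' +
      ∑ k ∈ Icc 1 (N - 1), (F k 0 + ∑ k' ∈ Icc 1 (N - 1), F k k') := by
  have hrange : range N = insert 0 (Icc 1 (N - 1)) := by ext; simp; omega
  simp only [hrange, sum_insert (by simp : 0 ∉ Icc 1 (N - 1))]

lemma sum_sum_le_of_diag_offDiag {ι R : Type*} [DecidableEq ι] [CommRing R] [LinearOrder R]
    [IsStrictOrderedRing R] (s : Finset ι) {F G : ι → ι → R} {A B : R} (hB : 0 ≤ B)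
    (hdiag : ∀ i ∈ s, F i i ≤ G i i + A)
    (hoff : ∀ i ∈ s, ∀ j ∈ s, i ≠ j → F i j ≤ G i j + B) :
    ∑ i ∈ s, ∑ j ∈ s, F i j ≤ ∑ i ∈ s, ∑ j ∈ s, G i j + #s * A + #s ^ 2 * B := by
  calc _ ≤ ∑ i ∈ s, ∑ j ∈ s, (G i j + (if i = j then A else 0) + B) := by
        refine sum_le_sum fun i hi => sum_le_sum fun j hj => ?_
        split_ifs with h
        · subst h; linarith [hdiag i hi]
        · linarith [hoff i hi j hj h]
    _ = _ := by simp [sum_add_distrib, sum_ite_eq, sq, mul_assoc]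

lemma abs_fract_natCast_div_sub_half_le {m n : ℕ} (h : ¬ n ∣ m) :
    |Int.fract ((m : ℝ) / n) - 1 / 2| ≤ 1 / 2 - 1 / n := by
  rcases n.eq_zero_or_pos with rfl | hn
  · simp
  have hlo : 1 ≤ m % n := Nat.pos_of_ne_zero fun h0 => h (Nat.dvd_of_mod_eq_zero h0)
  have hhi : m % n + 1 ≤ n := Nat.mod_lt m hn
  have hn' : (0 : ℝ) < n := by exact_mod_cast hn
  rw [Int.fract_div_natCast_eq_div_natCast_mod, abs_le]
  have hlo' : (1 : ℝ) / n ≤ (m % n : ℕ) / n := by gcongr; exact_mod_cast hlo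
  have hhi' : ((m % n : ℕ) : ℝ) / n + 1 / n ≤ 1 := by
    rw [← add_div, div_le_one hn']; exact_mod_cast hhi
  constructor <;> linarith

section Sawtooth

variable {N : ℕ}

lemma natCast_card_Icc_one_sub_one (hN : 0 < N) : (#(Icc 1 (N - 1)) : ℝ) = N - 1 := by
  simp [Nat.cast_pred hN]

lemma sum_Icc_div_sub_half (hN : 0 < N) : ∑ a ∈ Icc 1 (N - 1), ((a : ℝ) / N - 1 / 2) = 0 := by
  rw [sum_sub_distrib, ← sum_div, sum_Icc_natCast, sum_const, nsmul_eq_mul,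
    natCast_card_Icc_one_sub_one hN, Nat.cast_pred hN]
  field_simp
  ring

lemma sum_Icc_div_sub_half_sq (hN : 0 < N) :
    ∑ a ∈ Icc 1 (N - 1), ((a : ℝ) / N - 1 / 2) ^ 2 =
      ((N : ℝ) - 1) * (N - 2) / (12 * N) := by
  simp only [sub_sq, sum_add_distrib, sum_sub_distrib, div_pow, ← sum_div, ← sum_mul,
    ← mul_sum]
  rw [sum_Icc_natCast, sum_Icc_natCast_sq, sum_const, nsmul_eq_mul,
    natCast_card_Icc_one_sub_one hN, Nat.cast_pred hN]
  field_simp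
  ring

lemma natCast_zmod_ne {a b : ℕ} (ha : a < N) (hb : b < N) (hab : a ≠ b) :
    (a : ZMod N) ≠ b :=
  fun h => hab (by rw [← ZMod.val_cast_of_lt ha, h, ZMod.val_cast_of_lt hb])

lemma natCast_zmod_ne_zero_of_mem_Icc {k : ℕ} (hk : k ∈ Icc 1 (N - 1)) :
    (k : ZMod N) ≠ 0 := by
  rw [mem_Icc] at hk
  exact Nat.cast_zero (R := ZMod N) ▸ natCast_zmod_ne (by omega) (by omega) (by omega)

lemma sum_Icc_fract_intCast_mul_div (hN : N.Prime) {c : ℤ} (hc : (c : ZMod N) ≠ 0)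
    (f : ℝ → ℝ) :
    ∑ z ∈ Icc 1 (N - 1), f (Int.fract (c * z / N)) = ∑ a ∈ Icc 1 (N - 1), f (a / N) := by
  have := Fact.mk hN
  set r : ℕ → ℕ := fun z => ((c : ZMod N) * z).val
  have hmaps : Set.MapsTo r (Icc 1 (N - 1)) (Icc 1 (N - 1)) := by
    intro z hz
    have hr0 : r z ≠ 0 :=
      (ZMod.val_ne_zero _).mpr (mul_ne_zero hc (natCast_zmod_ne_zero_of_mem_Icc hz))
    have hrN : r z < N := ZMod.val_lt _
    rw [mem_coe, mem_Icc]
    omega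
  have hinj : Set.InjOn r (Icc 1 (N - 1)) := by
    intro z hz z' hz' h
    rw [mem_coe, mem_Icc] at hz hz'
    have := mul_left_cancel₀ hc (ZMod.val_injective _ h)
    rw [← ZMod.val_cast_of_lt (n := N) (a := z) (by omega), this, ZMod.val_cast_of_lt (by omega)]
  have hbij := ((Icc 1 (N - 1)).finite_toSet.injOn_iff_bijOn_of_mapsTo hmaps).mp hinj
  refine sum_nbij r (fun z hz => hmaps hz) hinj hbij.surjOn fun z _ => ?_
  have hr : ((r z : ℕ) : ℤ) = c * z % N := by
    rw [← ZMod.val_intCast]; push_cast; rfl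
  have hfract := Int.fract_div_intCast_eq_div_intCast_mod (k := ℝ) (m := c * z) (n := N)
  push_cast at hfract
  rw [hfract, ← hr, Int.cast_natCast]

end Sawtooth

section Correlations

variable {N : ℕ}

lemma Xq_self (hN : 2 ≤ N) (k : ℕ) : Xq N k k = 1 / 12 := by
  have hN1 : (N : ℝ) - 1 ≠ 0 := (sub_pos.mpr (Nat.one_lt_cast.mpr hN)).ne'
  simp only [Xq, sub_self, zero_mul, zero_div, Int.fract_zero, B2, sum_const,
    natCast_card_Icc_one_sub_one (by omega : 0 < N), nsmul_eq_mul]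
  field_simp
  ring

lemma Xq_of_ne (hN : N.Prime) {k k' : ℕ} (hk : k < N) (hk' : k' < N) (hne : k ≠ k') :
    Xq N k k' = -(1 / (12 * N)) := by
  have hN1 : (N : ℝ) - 1 ≠ 0 := (sub_pos.mpr (Nat.one_lt_cast.mpr hN.one_lt)).ne'
  have hc : ((k - k' : ℤ) : ZMod N) ≠ 0 := by
    push_cast; exact sub_ne_zero.mpr (natCast_zmod_ne hk hk' hne)
  have hsum := sum_Icc_fract_intCast_mul_div hN hc B2
  push_cast at hsum
  have hB2 : ∀ t, B2 t = (t - 1 / 2) ^ 2 - 1 / 12 := fun t => by rw [B2]; ring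
  have hN0 : (N : ℝ) ≠ 0 := Nat.cast_ne_zero.mpr hN.ne_zero
  simp only [Xq, hB2, sum_sub_distrib] at hsum ⊢
  rw [hsum, sum_Icc_div_sub_half_sq hN.pos, sum_const, nsmul_eq_mul,
    natCast_card_Icc_one_sub_one hN.pos]
  field_simp
  ring

lemma Jq_comm (k k' : ℕ) : Jq N k k' = Jq N k' k := by
  simp only [Jq, mul_comm (Int.fract ((k : ℝ) * _ / N) - 1 / 2)]

lemma Jq_zero_zero (hN : 2 ≤ N) : Jq N 0 0 = 1 / 4 := by
  have hN1 : (N : ℝ) - 1 ≠ 0 := (sub_pos.mpr (Nat.one_lt_cast.mpr hN)).ne'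
  simp only [Jq, Nat.cast_zero, zero_mul, zero_div, Int.fract_zero, sum_const,
    natCast_card_Icc_one_sub_one (by omega : 0 < N), nsmul_eq_mul]
  field_simp
  ring

lemma Jq_zero_left (hN : N.Prime) {k : ℕ} (hk : k ∈ Icc 1 (N - 1)) : Jq N 0 k = 0 := by
  have hk0 : ((k : ℤ) : ZMod N) ≠ 0 := by simpa using natCast_zmod_ne_zero_of_mem_Icc hk
  have hsum := sum_Icc_fract_intCast_mul_div hN hk0 (fun t => t - 1 / 2)
  push_cast at hsum
  simp only [Jq, Nat.cast_zero, zero_mul, zero_div, Int.fract_zero, ← mul_sum, hsum,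
    sum_Icc_div_sub_half hN.pos, mul_zero]

lemma Jq_self (hN : N.Prime) {k : ℕ} (hk : k ∈ Icc 1 (N - 1)) :
    Jq N k k = ((N : ℝ) - 2) / (12 * N) := by
  have hN1 : (N : ℝ) - 1 ≠ 0 := (sub_pos.mpr (Nat.one_lt_cast.mpr hN.one_lt)).ne'
  have hk0 : ((k : ℤ) : ZMod N) ≠ 0 := by simpa using natCast_zmod_ne_zero_of_mem_Icc hk
  have hsum := sum_Icc_fract_intCast_mul_div hN hk0 (fun t => (t - 1 / 2) ^ 2)
  push_cast at hsum
  simp only [Jq, ← sq, hsum, sum_Icc_div_sub_half_sq hN.pos]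
  field_simp

lemma abs_Jq_le_s3 (hN : N.Prime) {k k' : ℕ} (hk : k ∈ Icc 1 (N - 1))
    (hk' : k' ∈ Icc 1 (N - 1)) :
    |Jq N k k'| ≤ (1 / 2 - 1 / N) ^ 2 := by
  have hsaw : ∀ {j}, j ∈ Icc 1 (N - 1) → ∀ z ∈ Icc 1 (N - 1),
      |Int.fract ((j : ℝ) * z / N) - 1 / 2| ≤ 1 / 2 - 1 / N := by
    intro j hj z hz
    rw [mem_Icc] at hj hz
    rw [← Nat.cast_mul]
    refine abs_fract_natCast_div_sub_half_le fun hdvd => ?_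
    rcases hN.dvd_mul.mp hdvd with h | h <;> exact absurd (Nat.le_of_dvd (by omega) h) (by omega)
  have hsum : |∑ z ∈ Icc 1 (N - 1), (Int.fract ((k : ℝ) * z / N) - 1 / 2) *
      (Int.fract ((k' : ℝ) * z / N) - 1 / 2)| ≤ (N - 1) * (1 / 2 - 1 / N) ^ 2 := by
    rw [← natCast_card_Icc_one_sub_one hN.pos, ← nsmul_eq_mul]
    refine (abs_sum_le_sum_abs _ _).trans (sum_le_card_nsmul _ _ _ fun z hz => ?_)
    rw [abs_mul, sq]
    exact mul_le_mul (hsaw hk z hz) (hsaw hk' z hz) (abs_nonneg _)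
      ((abs_nonneg _).trans (hsaw hk z hz))
  have hN1 : (0 : ℝ) < N - 1 := sub_pos.mpr (Nat.one_lt_cast.mpr hN.one_lt)
  rw [Jq, abs_mul, abs_of_pos (by positivity : (0 : ℝ) < 1 / (N - 1))]
  calc _ ≤ 1 / ((N : ℝ) - 1) * ((N - 1) * (1 / 2 - 1 / N) ^ 2) := by gcongr
    _ = _ := by field_simp

lemma Xq_add_Jq_zero_zero (hN : 2 ≤ N) : Xq N 0 0 + Jq N 0 0 = 1 / 3 := by
  rw [Xq_self hN, Jq_zero_zero hN]; norm_num

lemma Xq_add_Jq_zero_left (hN : N.Prime) {k : ℕ} (hk : k ∈ Icc 1 (N - 1)) :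
    Xq N 0 k + Jq N 0 k = -(1 / (12 * N)) := by
  have hk' := mem_Icc.mp hk
  rw [Xq_of_ne hN hN.pos (by omega) (by omega), Jq_zero_left hN hk, add_zero]

lemma Xq_add_Jq_zero_right (hN : N.Prime) {k : ℕ} (hk : k ∈ Icc 1 (N - 1)) :
    Xq N k 0 + Jq N k 0 = -(1 / (12 * N)) := by
  have hk' := mem_Icc.mp hk
  rw [Xq_of_ne hN (by omega) hN.pos (by omega), Jq_comm, Jq_zero_left hN hk, add_zero]

lemma Xq_add_Jq_self (hN : N.Prime) {k : ℕ} (hk : k ∈ Icc 1 (N - 1)) :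
    Xq N k k + Jq N k k = ((N : ℝ) - 1) / (6 * N) := by
  have hN0 : (N : ℝ) ≠ 0 := Nat.cast_ne_zero.mpr hN.ne_zero
  rw [Xq_self hN.two_le, Jq_self hN hk]
  field_simp
  ring

lemma abs_pow_Xq_add_Jq_sub_pow_Jq_le (hN : N.Prime) {k k' : ℕ} (hk : k ∈ Icc 1 (N - 1))
    (hk' : k' ∈ Icc 1 (N - 1)) (hne : k ≠ k') (m : ℕ) :
    |(Xq N k k' + Jq N k k') ^ m - Jq N k k' ^ m| ≤ m * (1 / 4) ^ (m - 1) / (12 * N) := by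
  have hN0 : (0 : ℝ) < N := Nat.cast_pos.mpr hN.pos
  have hX : |Xq N k k'| = 1 / (12 * N) := by
    rw [mem_Icc] at hk hk'
    rw [Xq_of_ne hN (by omega) (by omega) hne, abs_neg, abs_of_pos (by positivity)]
  have hJ := abs_Jq_le_s3 hN hk hk'
  have hinv : 0 < 1 / (N : ℝ) ∧ 1 / (N : ℝ) ≤ 1 / 2 := ⟨by positivity, by
    gcongr; exact_mod_cast hN.two_le⟩
  have hJ4 : |Jq N k k'| ≤ 1 / 4 := hJ.trans (by nlinarith)
  have hXJ4 : |Xq N k k' + Jq N k k'| ≤ 1 / 4 := by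
    calc _ ≤ |Xq N k k'| + |Jq N k k'| := abs_add_le _ _
      _ ≤ 1 / (12 * N) + (1 / 2 - 1 / N) ^ 2 := by rw [hX]; gcongr
      _ = 1 / 4 - 1 / N * (11 / 12 - 1 / N) := by ring
      _ ≤ 1 / 4 := by nlinarith
  calc _ ≤ |Xq N k k' + Jq N k k' - Jq N k k'| * m *
        max |Xq N k k' + Jq N k k'| |Jq N k k'| ^ (m - 1) := abs_pow_sub_pow_le _ _ _
    _ ≤ 1 / (12 * N) * m * (1 / 4) ^ (m - 1) := by
        rw [add_sub_cancel_right, hX]; gcongr; exact max_le hXJ4 hJ4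
    _ = _ := by ring

end Correlations

-- The four terms bound the corner `(0,0)`, the zero row and column, the diagonal and the
-- off-diagonal block of the double sum, with `x = N`.
lemma error_terms_le (x : ℝ) (hx : 2 ≤ x) (m : ℕ) :
    (1 / 3) ^ m + 2 * ((x - 1) * (1 / (12 * x)) ^ m) + (x - 1) * (1 / 6) ^ m +
      (x - 1) ^ 2 * (m * (1 / 4) ^ (m - 1) / (12 * x)) ≤ (2 / 3 ^ m + 1 / 4 ^ m) * x := by
  rcases m with _ | n
  · norm_num; linarith
  rw [Nat.add_sub_cancel, div_eq_mul_one_div (2 : ℝ), ← one_div_pow, ← one_div_pow]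
  have hx0 : 0 < x := by linarith
  have hrow : 2 * ((x - 1) * (1 / (12 * x)) ^ (n + 1)) ≤ (x - 1) * (1 / 3) ^ (n + 1) := by
    have : (1 / (12 * x)) ^ (n + 1) ≤ (1 / 3) ^ (n + 1) / 8 := by
      rw [pow_succ, pow_succ]
      calc _ ≤ (1 / 3 : ℝ) ^ n * (1 / 24) := by gcongr <;> linarith
        _ = _ := by ring
    nlinarith [mul_le_mul_of_nonneg_left this (by linarith : 0 ≤ x - 1),
      pow_pos (by norm_num : (0 : ℝ) < 1 / 3) (n + 1)]
  have hdiag : (x - 1) * (1 / 6) ^ (n + 1) ≤ x * (1 / 4) ^ (n + 1) := by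
    gcongr <;> norm_num
  have hBernoulli : ((n : ℝ) + 1) * (1 / 4) ^ n ≤ 12 * (1 / 3) ^ (n + 1) := by
    have := one_add_mul_le_pow (a := (1 / 3 : ℝ)) (by norm_num) n
    calc ((n : ℝ) + 1) * (1 / 4) ^ n ≤ 3 * (1 + 1 / 3) ^ n * (1 / 4) ^ n := by
          gcongr; linarith
      _ = 9 * (1 / 3) ^ (n + 1) := by rw [mul_assoc, ← mul_pow, pow_succ]; norm_num; ring
      _ ≤ 12 * (1 / 3) ^ (n + 1) := by gcongr; norm_num
  have hoff : (x - 1) ^ 2 * ((n + 1 : ℕ) * (1 / 4) ^ n / (12 * x)) ≤ x * (1 / 3) ^ (n + 1) := by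
    calc _ = (x - 1) ^ 2 / (12 * x) * (((n : ℝ) + 1) * (1 / 4) ^ n) := by push_cast; ring
      _ ≤ x / 12 * (12 * (1 / 3) ^ (n + 1)) := by
          refine mul_le_mul ?_ hBernoulli (by positivity) (by positivity)
          rw [div_le_div_iff₀ (by positivity) (by norm_num)]; nlinarith
      _ = _ := by ring
  linarith

lemma sum_sum_pow_Xq_add_Jq_le {N : ℕ} (hN : N.Prime) (m : ℕ) :
    ∑ k ∈ range N, ∑ k' ∈ range N, (Xq N k k' + Jq N k k') ^ m ≤
      (2 / 3 ^ m + 1 / 4 ^ m) * N +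
        ∑ k ∈ Icc 1 (N - 1), ∑ k' ∈ Icc 1 (N - 1), Jq N k k' ^ m := by
  have hN2 : (2 : ℝ) ≤ N := by exact_mod_cast hN.two_le
  have hcard : (#(Icc 1 (N - 1)) : ℝ) = N - 1 := natCast_card_Icc_one_sub_one hN.pos
  have hδ : (0 : ℝ) ≤ 1 / (12 * N) := by positivity
  have hrow :
      ∑ k ∈ Icc 1 (N - 1), (Xq N 0 k + Jq N 0 k) ^ m ≤ (N - 1) * (1 / (12 * N)) ^ m := by
    rw [← hcard, ← nsmul_eq_mul]
    exact sum_le_card_nsmul _ _ _ fun k hk => Xq_add_Jq_zero_left hN hk ▸ neg_pow_le_pow hδ m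
  have hcol :
      ∑ k ∈ Icc 1 (N - 1), (Xq N k 0 + Jq N k 0) ^ m ≤ (N - 1) * (1 / (12 * N)) ^ m := by
    rw [← hcard, ← nsmul_eq_mul]
    exact sum_le_card_nsmul _ _ _ fun k hk => Xq_add_Jq_zero_right hN hk ▸ neg_pow_le_pow hδ m
  have hblock : ∑ k ∈ Icc 1 (N - 1), ∑ k' ∈ Icc 1 (N - 1), (Xq N k k' + Jq N k k') ^ m ≤
      ∑ k ∈ Icc 1 (N - 1), ∑ k' ∈ Icc 1 (N - 1), Jq N k k' ^ m + (N - 1) * (1 / 6) ^ m +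
        (N - 1) ^ 2 * (m * (1 / 4) ^ (m - 1) / (12 * N)) := by
    rw [← hcard]
    refine sum_sum_le_of_diag_offDiag _ (by positivity) (fun k hk => ?_)
      fun k hk k' hk' hne => ?_
    · have hJ : 0 ≤ Jq N k k ^ m := by
        rw [Jq_self hN hk]; exact pow_nonneg (div_nonneg (by linarith) (by positivity)) m
      have hXJ : (Xq N k k + Jq N k k) ^ m ≤ (1 / 6) ^ m := by
        rw [Xq_add_Jq_self hN hk]
        refine pow_le_pow_left₀ (div_nonneg (by linarith) (by positivity)) ?_ m
        rw [div_le_div_iff₀ (by positivity) (by norm_num)]; linarith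
      linarith
    · linarith [le_abs_self ((Xq N k k' + Jq N k k') ^ m - Jq N k k' ^ m),
        abs_pow_Xq_add_Jq_sub_pow_Jq_le hN hk hk' hne m]
  rw [sum_range_sum_range_eq hN.pos, sum_add_distrib, Xq_add_Jq_zero_zero hN.two_le]
  linarith [error_terms_le N hN2 m]

theorem avg_e2u_le_general (N : ℕ) (hN : N.Prime) (u : Finset ℕ) :
    (1 / (N : ℝ) ^ 2) *
        ∑ k ∈ Finset.range N, ∑ k' ∈ Finset.range N, (Xq N k k' + Jq N k k') ^ u.card
      ≤ (2 / (3 : ℝ) ^ u.card + 1 / (4 : ℝ) ^ u.card) / N +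
        (1 / (N : ℝ) ^ 2) *
          ∑ k ∈ Finset.Icc 1 (N - 1), ∑ k' ∈ Finset.Icc 1 (N - 1), (Jq N k k') ^ u.card := by
  have hN0 : (N : ℝ) ≠ 0 := Nat.cast_ne_zero.mpr hN.ne_zero
  calc _ ≤ 1 / (N : ℝ) ^ 2 * ((2 / 3 ^ #u + 1 / 4 ^ #u) * N +
        ∑ k ∈ Icc 1 (N - 1), ∑ k' ∈ Icc 1 (N - 1), Jq N k k' ^ #u) := by
        gcongr; exact sum_sum_pow_Xq_add_Jq_le hN #u
    _ = _ := by field_simp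

/-- `ē²_u(N) ≤ c_u/N + (1/N²) ∑_{k=1}^{N-1} ∑_{k'=1}^{N-1} J_{N;k,k'}^{|u|}`
with `c_u = 2/3^{|u|} + 1/4^{|u|}`. -/
theorem avg_e2u_le (N s : ℕ) (hN : N.Prime) (u : Finset ℕ)
    (hus : u ⊆ Finset.Icc 1 s) (hu : u.Nonempty) :
    (1 / (N : ℝ) ^ 2) *
        ∑ k ∈ Finset.range N, ∑ k' ∈ Finset.range N, (Xq N k k' + Jq N k k') ^ u.card
      ≤ (2 / (3 : ℝ) ^ u.card + 1 / (4 : ℝ) ^ u.card) / N +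
        (1 / (N : ℝ) ^ 2) *
          ∑ k ∈ Finset.Icc 1 (N - 1), ∑ k' ∈ Finset.Icc 1 (N - 1), (Jq N k k') ^ u.card :=
  avg_e2u_le_general N hN u
end

section
/- Let N be a prime number and ∅ ≠ u ⊆ {1,…,s}. Define ē²_u(N) := (1/N²) ∑_{k=0}^{N-1} ∑_{k'=0}^{N-1} (X_{N;k,k'} + J_{N;k,k'})^{|u|}, with X and J as below. Then ē²_u(N) ≤ c_u/N + (1/N) ∑_{κ=1}^{N-1} |J_{N;κ,1}|^{|u|}, where c_u := 2/3^{|u|} + 1/4^{|u|}. -/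
open Finset Real Filter

/-
Both `X_{N;k,k'}` and `J_{N;k,k'}` depend only on the residues of `k, k'` modulo `N`, so the double
sum runs over pairs `(a, b)` of the field `ZMod N`. There `X` is `1/12` on the diagonal and
`-1/(12N)` off it, by the distribution relation `∑_{z<N} B₂(z/N) = 1/(6N)` and because
`z ↦ (a - b) z` permutes the nonzero residues. The same permutation gives `J_{a,b} = J_{a/b,1}`
and `J_{0,b} = 0` for `b ≠ 0`, while `|J| ≤ 1/4` is clear. Termwise
`(X + J)^n ≤ |J|^n + n (7/24)^(n-1) / (12N)`, plus `(1/3)^n` on the diagonal; the error term is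
the mean value bound for `t ↦ t^n` on `[|J|, |J| + 1/(12N)]`. Summing, each column `b ≠ 0`
contributes `∑_κ |J_{κ,1}|^n`, the column `b = 0` at most `N/4^n`, the diagonal `N/3^n`, and the
errors at most `N/3^n` because `n (7/8)^(n-1) ≤ 4`.
-/

lemma succ_mul_seven_pow_le (n : ℕ) : (n + 1) * 7 ^ n ≤ 4 * 8 ^ n := by
  induction n with
  | zero => norm_num
  | succ n ih =>
    rcases lt_or_ge n 6 with h | h
    · interval_cases n <;> norm_num
    · calc (n + 1 + 1) * 7 ^ (n + 1) = (n + 2) * 7 * 7 ^ n := by ring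
        _ ≤ 8 * (n + 1) * 7 ^ n := Nat.mul_le_mul_right _ (by omega)
        _ = 8 * ((n + 1) * 7 ^ n) := by ring
        _ ≤ 8 * (4 * 8 ^ n) := by gcongr
        _ = 4 * 8 ^ (n + 1) := by ring

lemma mul_pow_seven_div_le (m : ℕ) : m * (7 / 24 : ℝ) ^ (m - 1) / 12 ≤ (1 / 3) ^ m := by
  rcases m with _ | n
  · simp
  have h : ((n : ℝ) + 1) * (7 / 8) ^ n ≤ 4 := by
    rw [div_pow, mul_div_assoc', div_le_iff₀ (by positivity)]
    exact_mod_cast succ_mul_seven_pow_le n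
  calc ((n + 1 : ℕ) : ℝ) * (7 / 24) ^ (n + 1 - 1) / 12
      = ((n + 1) * (7 / 8) ^ n) * (1 / 3) ^ n / 12 := by
        rw [Nat.add_sub_cancel, mul_assoc, ← mul_pow]; push_cast; norm_num
    _ ≤ 4 * (1 / 3) ^ n / 12 := by gcongr
    _ = (1 / 3) ^ (n + 1) := by ring

lemma sum_erase_zero_mul_left {K M : Type*} [GroupWithZero K] [Fintype K] [DecidableEq K]
    [AddCommGroup M] {c : K} (hc : c ≠ 0) (F : K → M) :
    ∑ x ∈ univ.erase 0, F (c * x) = ∑ x ∈ univ.erase 0, F x := by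
  rw [sum_erase_eq_sub (mem_univ _), sum_erase_eq_sub (mem_univ _), mul_zero]
  exact congrArg (· - F 0) (Equiv.sum_comp (Equiv.mulLeft₀ c hc) F)

section

variable {N : ℕ}

lemma sum_range_div_sub_half (hN : N ≠ 0) : ∑ z ∈ range N, ((z : ℝ) / N - 1 / 2) = -1 / 2 := by
  have closed : ∀ n : ℕ, ∑ z ∈ range n, ((z : ℝ) / N - 1 / 2) = n * (n - 1) / (2 * N) - n / 2 := by
    intro n
    induction n with
    | zero => simp
    | succ n ih => rw [sum_range_succ, ih]; push_cast; ring
  have hN' : (N : ℝ) ≠ 0 := by exact_mod_cast hN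
  rw [closed]
  field_simp
  ring

lemma sum_range_B2_div (hN : N ≠ 0) : ∑ z ∈ range N, B2 (z / N) = 1 / (6 * N) := by
  have closed : ∀ n : ℕ, ∑ z ∈ range n, B2 (z / N) =
      n * (n - 1) * (2 * n - 1) / (6 * N ^ 2) - n * (n - 1) / (2 * N) + n / 6 := by
    intro n
    induction n with
    | zero => simp
    | succ n ih => rw [sum_range_succ, ih, B2]; push_cast; ring
  have hN' : (N : ℝ) ≠ 0 := by exact_mod_cast hN
  rw [closed]
  field_simp
  ring

noncomputable def resFract (x : ZMod N) : ℝ := x.val / N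

@[simp]
lemma resFract_zero : resFract (0 : ZMod N) = 0 := by
  simp [resFract]

lemma fract_intCast_div_eq_resFract [NeZero N] (a : ℤ) :
    Int.fract ((a : ℝ) / N) = resFract (a : ZMod N) := by
  rw [Int.fract_div_intCast_eq_div_intCast_mod, resFract, ← ZMod.val_intCast, Int.cast_natCast]

lemma fract_natCast_mul_div [NeZero N] (k z : ℕ) :
    Int.fract ((k : ℝ) * z / N) = resFract ((k : ZMod N) * (z : ZMod N)) := by
  simpa using fract_intCast_div_eq_resFract (N := N) (k * z)

lemma fract_natCast_sub_mul_div [NeZero N] (k k' z : ℕ) :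
    Int.fract (((k : ℝ) - k') * z / N) =
      resFract (((k : ZMod N) - (k' : ZMod N)) * (z : ZMod N)) := by
  simpa using fract_intCast_div_eq_resFract (N := N) ((k - k') * z)

lemma abs_resFract_sub_half_le [NeZero N] (x : ZMod N) : |resFract x - 1 / 2| ≤ 1 / 2 := by
  have hN : (0 : ℝ) < N := by exact_mod_cast NeZero.pos N
  have hlt : resFract x < 1 := by
    rw [resFract, div_lt_one hN]; exact_mod_cast ZMod.val_lt x
  have hnonneg : 0 ≤ resFract x := by unfold resFract; positivity
  rw [abs_le]; constructor <;> linarith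

lemma sum_range_natCast_eq_sum_univ [NeZero N] {M : Type*} [AddCommMonoid M] (F : ZMod N → M) :
    ∑ k ∈ range N, F k = ∑ x, F x :=
  sum_nbij' Nat.cast ZMod.val (by simp) (by simp [ZMod.val_lt])
    (fun _ hk => ZMod.val_cast_of_lt (mem_range.1 hk)) (fun x _ => ZMod.natCast_zmod_val x)
    (fun _ _ => rfl)

lemma sum_Icc_natCast_eq_sum_erase_zero [NeZero N] {M : Type*} [AddCommGroup M]
    (F : ZMod N → M) : ∑ z ∈ Icc 1 (N - 1), F z = ∑ x ∈ univ.erase 0, F x := by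
  have hIcc : Icc 1 (N - 1) = (range N).erase 0 := by
    ext z; simp only [mem_Icc, mem_erase, mem_range]; omega
  rw [hIcc, sum_erase_eq_sub (mem_range.2 (NeZero.pos N)), sum_erase_eq_sub (mem_univ _),
    sum_range_natCast_eq_sum_univ, Nat.cast_zero]

lemma sum_resFract [NeZero N] {M : Type*} [AddCommMonoid M] (F : ℝ → M) :
    ∑ x : ZMod N, F (resFract x) = ∑ z ∈ range N, F (z / N) := by
  rw [← sum_range_natCast_eq_sum_univ]
  exact sum_congr rfl fun z hz => by rw [resFract, ZMod.val_cast_of_lt (mem_range.1 hz)]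

lemma card_erase_zero_zmod [NeZero N] : ((univ.erase (0 : ZMod N)).card : ℝ) = N - 1 := by
  rw [card_erase_of_mem (mem_univ _), card_univ, ZMod.card, Nat.cast_pred (NeZero.pos N)]

lemma sum_erase_zero_resFract_sub_half [NeZero N] :
    ∑ x ∈ univ.erase (0 : ZMod N), (resFract x - 1 / 2) = 0 := by
  rw [sum_erase_eq_sub (mem_univ _), sum_resFract (· - 1 / 2),
    sum_range_div_sub_half (NeZero.ne N), resFract_zero]
  norm_num

lemma sum_erase_zero_B2_resFract [NeZero N] :
    ∑ x ∈ univ.erase (0 : ZMod N), B2 (resFract x) = 1 / (6 * N) - 1 / 6 := by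
  rw [sum_erase_eq_sub (mem_univ _), sum_resFract B2, sum_range_B2_div (NeZero.ne N)]
  norm_num [B2]

lemma Xq_eq_ite [Fact N.Prime] (k k' : ℕ) :
    Xq N k k' = if (k : ZMod N) = k' then 1 / 12 else -(1 / (12 * (N : ℝ))) := by
  have hN : (2 : ℝ) ≤ N := by exact_mod_cast (Fact.out : N.Prime).two_le
  have hN1 : (N : ℝ) - 1 ≠ 0 := by linarith
  have hN0 : (N : ℝ) ≠ 0 := by linarith
  have hX : Xq N k k' = 1 / (2 * (N - 1)) *
      ∑ x ∈ univ.erase 0, B2 (resFract (((k : ZMod N) - (k' : ZMod N)) * x)) := by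
    rw [Xq, ← sum_Icc_natCast_eq_sum_erase_zero]
    exact congrArg _ (sum_congr rfl fun z _ => by rw [fract_natCast_sub_mul_div])
  rw [hX]
  split_ifs with h
  · simp only [sub_eq_zero.2 h, zero_mul, sum_const, nsmul_eq_mul, card_erase_zero_zmod]
    norm_num [B2]
    field_simp
    ring
  · rw [sum_erase_zero_mul_left (sub_ne_zero.2 h) (fun x => B2 (resFract x)),
      sum_erase_zero_B2_resFract]
    field_simp
    ring

noncomputable def resJ [NeZero N] (a b : ZMod N) : ℝ :=
  1 / ((N : ℝ) - 1) * ∑ x ∈ univ.erase 0, (resFract (a * x) - 1 / 2) * (resFract (b * x) - 1 / 2)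

lemma Jq_eq_resJ [NeZero N] (k k' : ℕ) : Jq N k k' = resJ (k : ZMod N) k' := by
  rw [Jq, resJ, ← sum_Icc_natCast_eq_sum_erase_zero]
  exact congrArg _ (sum_congr rfl fun z _ => by rw [fract_natCast_mul_div, fract_natCast_mul_div])

lemma abs_resJ_le [NeZero N] (a b : ZMod N) : |resJ a b| ≤ 1 / 4 := by
  have hterm (x : ZMod N) :
      |(resFract (a * x) - 1 / 2) * (resFract (b * x) - 1 / 2)| ≤ 1 / 4 := by
    rw [abs_mul]
    calc _ ≤ 1 / 2 * (1 / 2 : ℝ) := mul_le_mul (abs_resFract_sub_half_le _)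
          (abs_resFract_sub_half_le _) (abs_nonneg _) (by norm_num)
      _ = 1 / 4 := by norm_num
  have hN : (0 : ℝ) ≤ N - 1 := by
    rw [← card_erase_zero_zmod]; positivity
  rw [resJ, abs_mul, abs_of_nonneg (by positivity)]
  calc _ ≤ 1 / ((N : ℝ) - 1) * ((N - 1) * (1 / 4)) := by
        gcongr
        refine (abs_sum_le_sum_abs _ _).trans ?_
        rw [← card_erase_zero_zmod, ← nsmul_eq_mul]
        exact sum_le_card_nsmul _ _ _ fun x _ => hterm x
    _ ≤ 1 / 4 := by
        rcases hN.eq_or_lt with h | h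
        · rw [← h]; norm_num
        · rw [← mul_assoc, one_div_mul_cancel h.ne', one_mul]

lemma resJ_mul_right [Fact N.Prime] {c : ZMod N} (hc : c ≠ 0) (a b : ZMod N) :
    resJ (a * c) (b * c) = resJ a b := by
  simp only [resJ, mul_assoc]
  exact congrArg _
    (sum_erase_zero_mul_left hc fun x => (resFract (a * x) - 1 / 2) * (resFract (b * x) - 1 / 2))

lemma resJ_zero_left [Fact N.Prime] {b : ZMod N} (hb : b ≠ 0) : resJ 0 b = 0 := by
  simp only [resJ, zero_mul, resFract_zero]
  rw [← mul_sum, sum_erase_zero_mul_left hb (fun x => resFract x - 1 / 2),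
    sum_erase_zero_resFract_sub_half]
  simp

lemma pow_ite_add_resJ_le [Fact (1 < N)] (a b : ZMod N) (m : ℕ) :
    ((if a = b then 1 / 12 else -(1 / (12 * (N : ℝ)))) + resJ a b) ^ m ≤
      |resJ a b| ^ m + (m * (7 / 24) ^ (m - 1) / (12 * N) + if a = b then (1 / 3) ^ m else 0) := by
  have hN : (2 : ℝ) ≤ N := by exact_mod_cast (Fact.out : 1 < N)
  have hJ := abs_resJ_le a b
  have hpow (x : ℝ) : (x + resJ a b) ^ m ≤ (|resJ a b| + |x|) ^ m :=
    (le_abs_self _).trans <| (abs_pow _ _).trans_le <| pow_le_pow_left₀ (abs_nonneg _)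
      ((abs_add_le _ _).trans_eq (add_comm _ _)) m
  have herr : 0 ≤ m * (7 / 24 : ℝ) ^ (m - 1) / (12 * N) := by positivity
  split_ifs with h
  · calc _ ≤ (|resJ a b| + |(1 / 12 : ℝ)|) ^ m := hpow _
      _ ≤ (1 / 3) ^ m := by gcongr; norm_num at hJ ⊢; linarith
      _ ≤ _ := by linarith [pow_nonneg (abs_nonneg (resJ a b)) m]
  · set ε : ℝ := 1 / (12 * N)
    set J := |resJ a b|
    have hε : 0 ≤ ε ∧ ε ≤ 1 / 24 := ⟨by positivity, by
      rw [div_le_div_iff₀ (by positivity) (by norm_num)]; linarith⟩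
    have hmvt : (J + ε) ^ m - J ^ m ≤ ε * m * (J + ε) ^ (m - 1) := by
      have h := abs_pow_sub_pow_le (J + ε) J m
      rw [add_sub_cancel_left, abs_of_nonneg hε.1,
        max_eq_left (abs_le_abs_of_nonneg (abs_nonneg _) (by linarith)),
        abs_of_nonneg (add_nonneg (abs_nonneg _) hε.1 : 0 ≤ J + ε)] at h
      exact (le_abs_self _).trans h
    calc _ ≤ (J + |-ε|) ^ m := hpow _
      _ = (J + ε) ^ m := by rw [abs_neg, abs_of_nonneg hε.1]
      _ ≤ J ^ m + ε * m * (J + ε) ^ (m - 1) := by linarith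
      -- `|J| + ε ≤ 1/4 + 1/24 = 7/24`
      _ ≤ J ^ m + ε * m * (7 / 24) ^ (m - 1) := by gcongr; linarith
      _ = _ := by ring

variable [Fact N.Prime]

lemma sum_abs_resJ_pow_eq {m : ℕ} (hm : m ≠ 0) {b : ZMod N} (hb : b ≠ 0) :
    ∑ a, |resJ a b| ^ m = ∑ c ∈ univ.erase (0 : ZMod N), |resJ c 1| ^ m := by
  rw [sum_erase_eq_sub (mem_univ _), resJ_zero_left one_ne_zero, abs_zero, zero_pow hm, sub_zero,
    ← Equiv.sum_comp (Equiv.mulRight₀ b hb)]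
  refine sum_congr rfl fun c _ => ?_
  rw [Equiv.mulRight₀_apply, ← resJ_mul_right hb c 1, one_mul]

theorem sum_sum_pow_ite_add_resJ_le {m : ℕ} (hm : m ≠ 0) :
    ∑ a : ZMod N, ∑ b, ((if a = b then 1 / 12 else -(1 / (12 * (N : ℝ)))) + resJ a b) ^ m ≤
      (2 / 3 ^ m + 1 / 4 ^ m) * N + N * ∑ c ∈ univ.erase (0 : ZMod N), |resJ c 1| ^ m := by
  set T := ∑ c ∈ univ.erase (0 : ZMod N), |resJ c 1| ^ m
  have hN : (0 : ℝ) < N := by exact_mod_cast (Fact.out : N.Prime).pos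
  have hcols : ∑ b : ZMod N, ∑ a, |resJ a b| ^ m ≤ N * (1 / 4) ^ m + (N - 1) * T := by
    rw [← add_sum_erase _ _ (mem_univ 0),
      sum_congr rfl fun b hb => sum_abs_resJ_pow_eq hm (ne_of_mem_erase hb), sum_const,
      nsmul_eq_mul, card_erase_zero_zmod]
    gcongr
    calc ∑ a : ZMod N, |resJ a 0| ^ m ≤ ∑ a : ZMod N, (1 / 4 : ℝ) ^ m :=
          sum_le_sum fun a _ => pow_le_pow_left₀ (abs_nonneg _) (abs_resJ_le a 0) m
      _ = N * (1 / 4) ^ m := by simp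
  have hdiag : ∑ a : ZMod N, ∑ b : ZMod N,
      (m * (7 / 24 : ℝ) ^ (m - 1) / (12 * N) + if a = b then (1 / 3) ^ m else 0) ≤
        2 * N * (1 / 3) ^ m := by
    simp only [sum_add_distrib, sum_ite_eq, mem_univ, if_true, sum_const, card_univ, ZMod.card,
      nsmul_eq_mul]
    have := mul_pow_seven_div_le m
    field_simp
    nlinarith
  calc _ ≤ ∑ a : ZMod N, ∑ b : ZMod N, (|resJ a b| ^ m +
        (m * (7 / 24 : ℝ) ^ (m - 1) / (12 * N) + if a = b then (1 / 3) ^ m else 0)) :=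
        sum_le_sum fun a _ => sum_le_sum fun b _ => pow_ite_add_resJ_le a b m
    _ = ∑ b : ZMod N, ∑ a, |resJ a b| ^ m + ∑ a : ZMod N, ∑ b : ZMod N,
        (m * (7 / 24 : ℝ) ^ (m - 1) / (12 * N) + if a = b then (1 / 3) ^ m else 0) := by
        simp only [sum_add_distrib]; rw [sum_comm]
    _ ≤ (N * (1 / 4) ^ m + (N - 1) * T) + 2 * N * (1 / 3) ^ m := add_le_add hcols hdiag
    _ ≤ _ := by
        have hT : 0 ≤ T := sum_nonneg fun _ _ => by positivity
        rw [one_div_pow, one_div_pow]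
        linarith [show (2 / 3 ^ m + 1 / 4 ^ m) * (N : ℝ) = N * (1 / 4 ^ m) + 2 * N * (1 / 3 ^ m) by
          ring]

end

theorem avg_e2u_le_Jkappa_general (N : ℕ) (hN : N.Prime) (u : Finset ℕ) (hu : u.Nonempty) :
    (1 / (N : ℝ) ^ 2) *
        ∑ k ∈ Finset.range N, ∑ k' ∈ Finset.range N, (Xq N k k' + Jq N k k') ^ u.card
      ≤ (2 / (3 : ℝ) ^ u.card + 1 / (4 : ℝ) ^ u.card) / N +
        (1 / (N : ℝ)) * ∑ κ ∈ Finset.Icc 1 (N - 1), |Jq N κ 1| ^ u.card := by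
  have := Fact.mk hN
  have hN0 : (N : ℝ) ≠ 0 := by exact_mod_cast hN.ne_zero
  have hsum : ∑ k ∈ range N, ∑ k' ∈ range N, (Xq N k k' + Jq N k k') ^ u.card =
      ∑ a : ZMod N, ∑ b,
        ((if a = b then 1 / 12 else -(1 / (12 * (N : ℝ)))) + resJ a b) ^ u.card := by
    rw [← sum_range_natCast_eq_sum_univ]
    refine sum_congr rfl fun k _ => ?_
    rw [← sum_range_natCast_eq_sum_univ]
    exact sum_congr rfl fun k' _ => by rw [Xq_eq_ite, Jq_eq_resJ]
  have hT : ∑ κ ∈ Icc 1 (N - 1), |Jq N κ 1| ^ u.card =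
      ∑ c ∈ univ.erase (0 : ZMod N), |resJ c 1| ^ u.card := by
    simp only [Jq_eq_resJ, Nat.cast_one]
    exact sum_Icc_natCast_eq_sum_erase_zero fun c => |resJ c 1| ^ u.card
  rw [hsum, hT]
  calc _ ≤ 1 / (N : ℝ) ^ 2 * ((2 / 3 ^ u.card + 1 / 4 ^ u.card) * N +
        N * ∑ c ∈ univ.erase (0 : ZMod N), |resJ c 1| ^ u.card) := by
        gcongr; exact sum_sum_pow_ite_add_resJ_le hu.card_pos.ne'
    _ = _ := by field_simp

/-- `ē²_u(N) ≤ c_u/N + (1/N) ∑_{κ=1}^{N-1} |J_{N;κ,1}|^{|u|}`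
with `c_u = 2/3^{|u|} + 1/4^{|u|}`. -/
theorem avg_e2u_le_Jkappa (N s : ℕ) (hN : N.Prime) (u : Finset ℕ)
    (hus : u ⊆ Finset.Icc 1 s) (hu : u.Nonempty) :
    (1 / (N : ℝ) ^ 2) *
        ∑ k ∈ Finset.range N, ∑ k' ∈ Finset.range N, (Xq N k k' + Jq N k k') ^ u.card
      ≤ (2 / (3 : ℝ) ^ u.card + 1 / (4 : ℝ) ^ u.card) / N +
        (1 / (N : ℝ)) * ∑ κ ∈ Finset.Icc 1 (N - 1), |Jq N κ 1| ^ u.card :=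
  avg_e2u_le_Jkappa_general N hN u hu
end

section
/- Let N ≥ 3 be a prime number and κ ∈ {1,…,N-1}. Define T_N(κ) := ∑_{q=1}^{(N-1)/2} 1/(q · |r(qκ, N)|), where r(j, N) denotes the unique integer congruent to j modulo N with |r(j,N)| ≤ (N-1)/2. Then T_N(κ) < π²/6. -/
open Real

/-- `T_N(κ) = ∑_{q=1}^{(N-1)/2} 1/(q·|r(qκ, N)|)`, where `r` is a function selecting the
representative of smallest magnitude modulo `N`. -/
noncomputable def TN (N : ℕ) (r : ℤ → ℤ) (κ : ℕ) : ℝ :=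
  ∑ q ∈ Finset.Icc 1 ((N - 1) / 2), 1 / ((q : ℝ) * |((r ((q : ℤ) * κ) : ℤ) : ℝ)|)

/-! The two factors `1/q` and `1/|r(qκ)|` are split by AM–GM. Since `q ↦ |r(qκ)|` is injective
on `1 ≤ q ≤ (N-1)/2` (the residues `±qκ` are pairwise distinct), both resulting sums are partial
sums of `∑ 1/n²` over finite sets of naturals, each strictly below `ζ(2) = π²/6`. -/

lemma one_div_mul_le_half_add (a b : ℝ) : 1 / (a * b) ≤ (1 / a ^ 2 + 1 / b ^ 2) / 2 := by
  have := two_mul_le_add_sq a⁻¹ b⁻¹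
  rw [one_div, one_div, one_div, mul_inv, ← inv_pow, ← inv_pow]
  linarith

lemma sum_one_div_sq_lt (s : Finset ℕ) : ∑ n ∈ s, 1 / (n : ℝ) ^ 2 < π ^ 2 / 6 := by
  obtain ⟨m, hm, hms⟩ : ∃ m, 0 < m ∧ m ∉ s :=
    ⟨s.sup id + 1, Nat.succ_pos _, fun h => (Finset.le_sup (f := id) h).not_gt (Nat.lt_succ_self _)⟩
  calc ∑ n ∈ s, 1 / (n : ℝ) ^ 2 < ∑ n ∈ insert m s, 1 / (n : ℝ) ^ 2 := by
        rw [Finset.sum_insert hms]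
        have : (0 : ℝ) < 1 / (m : ℝ) ^ 2 := by positivity
        linarith
    _ ≤ π ^ 2 / 6 := sum_le_hasSum _ (fun _ _ => by positivity) hasSum_zeta_two

lemma Int.ModEq.cancel_right_of_prime {p a b c : ℤ} (hp : Prime p) (hc : ¬ p ∣ c)
    (h : a * c ≡ b * c [ZMOD p]) : a ≡ b [ZMOD p] :=
  Int.modEq_of_dvd <| (hp.dvd_or_dvd (by simpa [sub_mul] using h.dvd)).resolve_right hc

lemma eq_of_modEq_or_modEq_neg {N a b : ℤ} (ha : 0 < a) (hb : 0 < b) (hab : a + b < N)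
    (h : a ≡ b [ZMOD N] ∨ a ≡ -b [ZMOD N]) : a = b := by
  rcases h with h | h
  · have := Int.eq_zero_of_abs_lt_dvd h.dvd (by rw [abs_lt]; omega)
    omega
  · have := Int.eq_zero_of_abs_lt_dvd (by simpa using h.dvd) (by rw [abs_lt]; omega)
    omega

lemma injOn_natAbs_mul {N : ℕ} (hN : N.Prime) {κ : ℤ} (hκ : ¬ (N : ℤ) ∣ κ) {r : ℤ → ℤ}
    (hr : ∀ j, r j ≡ j [ZMOD N]) :
    Set.InjOn (fun q : ℕ => (r (q * κ)).natAbs) (Finset.Icc 1 ((N - 1) / 2)) := by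
  intro q hq q' hq' h
  simp only [Finset.coe_Icc, Set.mem_Icc] at hq hq'
  have hp : Prime (N : ℤ) := Nat.prime_iff_prime_int.mp hN
  have hmod : q * κ ≡ q' * κ [ZMOD N] ∨ q * κ ≡ -q' * κ [ZMOD N] := by
    rcases Int.natAbs_eq_natAbs_iff.mp h with h | h
    · exact .inl ((hr _).symm.trans (h ▸ hr _))
    · exact .inr ((hr _).symm.trans (by simpa [h] using (hr (q' * κ)).neg))
  have : (q : ℤ) = q' := eq_of_modEq_or_modEq_neg (by omega) (by omega) (by omega)
    (hmod.imp (·.cancel_right_of_prime hp hκ) (·.cancel_right_of_prime hp hκ))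
  exact_mod_cast this

theorem TN_lt_general (N : ℕ) (hN : N.Prime)
    (κ : ℕ) (hκ : κ ∈ Finset.Icc 1 (N - 1))
    (r : ℤ → ℤ) (hr : ∀ j : ℤ, r j ≡ j [ZMOD (N : ℤ)] ∧ |r j| ≤ ((N : ℤ) - 1) / 2) :
    TN N r κ < π ^ 2 / 6 := by
  set s := Finset.Icc 1 ((N - 1) / 2)
  set f : ℕ → ℕ := fun q => (r (q * κ)).natAbs
  obtain ⟨hκ1, hκN1⟩ := Finset.mem_Icc.mp hκ
  have hκN : ¬ (N : ℤ) ∣ κ := fun h => by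
    have := Nat.le_of_dvd hκ1 (Int.natCast_dvd_natCast.mp h)
    omega
  have hf : Set.InjOn f s := injOn_natAbs_mul hN hκN fun j => (hr j).1
  calc TN N r κ ≤ ∑ q ∈ s, (1 / (q : ℝ) ^ 2 + 1 / (f q : ℝ) ^ 2) / 2 := by
        refine Finset.sum_le_sum fun q _ => ?_
        simpa [f, Nat.cast_natAbs] using one_div_mul_le_half_add (q : ℝ) (f q : ℝ)
    _ = ((∑ q ∈ s, 1 / (q : ℝ) ^ 2) + ∑ n ∈ s.image f, 1 / (n : ℝ) ^ 2) / 2 := by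
        rw [Finset.sum_image hf, ← Finset.sum_add_distrib, Finset.sum_div]
    _ < π ^ 2 / 6 := by linarith [sum_one_div_sq_lt s, sum_one_div_sq_lt (s.image f)]

/-- For `N ≥ 3` prime and `κ ∈ {1,…,N-1}`, `T_N(κ) < π²/6`. -/
theorem TN_lt (N : ℕ) (hN : N.Prime) (hN3 : 3 ≤ N)
    (κ : ℕ) (hκ : κ ∈ Finset.Icc 1 (N - 1))
    (r : ℤ → ℤ) (hr : ∀ j : ℤ, r j ≡ j [ZMOD (N : ℤ)] ∧ |r j| ≤ ((N : ℤ) - 1) / 2) :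
    TN N r κ < π ^ 2 / 6 :=
  TN_lt_general N hN κ hκ r hr
end

section
/- Let N ≥ 3 be a prime number and κ ∈ {1,…,N-1}. Define J_{N;κ,1} := (1/(N-1)) ∑_{z=1}^{N-1} ({κz/N} - 1/2)({z/N} - 1/2) and T_N(κ) := ∑_{q=1}^{(N-1)/2} 1/(q · |r(qκ, N)|), where r(j, N) denotes the unique integer congruent to j modulo N with |r(j,N)| ≤ (N-1)/2. Then |J_{N;κ,1}| ≤ (1/(2π²)) · (N/(N-1)) · (T_N(κ) + 10π² ln N/(9N)). -/
open Finset Real Filter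

/-!
The sawtooth has the finite Fourier expansion
`{j/N} - 1/2 = -(1/(2N)) ∑_{n=1}^{N-1} cot(πn/N) sin(2πnj/N)` for `N ∤ j`, which follows
from the Dirichlet kernel identity `cot x sin 2wx = 2 ∑_{k=1}^{w} cos 2kx + 1 - cos 2wx`.
Expanding one factor and using the orthogonality of the sines gives the cotangent formula for
the Dedekind sum, `(N - 1) J_{N;κ,1} = (1/(4N)) ∑_{n=1}^{N-1} cot(πn/N) cot(πnκ/N)`. The
summand is invariant under `n ↦ N - n`, and for `n ≤ (N-1)/2` we have `|cot(πn/N)| ≤ N/(πn)`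
and, by periodicity, `|cot(πnκ/N)| = |cot(π r(nκ,N)/N)| ≤ N/(π|r(nκ,N)|)`, from `tan x ≥ x`
on `(0, π/2)`. Hence `|J_{N;κ,1}| ≤ N T_N(κ) / (2π²(N-1))`.
-/

namespace Real

lemma cot_eq_inv_tan (x : ℝ) : cot x = (tan x)⁻¹ := (tan_inv_eq_cot x).symm

lemma cot_neg (x : ℝ) : cot (-x) = -cot x := by
  rw [cot_eq_inv_tan, cot_eq_inv_tan, tan_neg, inv_neg]

lemma cot_add_int_mul_pi (x : ℝ) (n : ℤ) : cot (x + n * π) = cot x := by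
  rw [cot_eq_inv_tan, cot_eq_inv_tan, tan_add_int_mul_pi]

lemma abs_cot_le_inv_abs {x : ℝ} (hx0 : x ≠ 0) (hx : |x| < π / 2) : |cot x| ≤ |x|⁻¹ := by
  wlog hpos : 0 < x generalizing x
  · have := this (neg_ne_zero.mpr hx0) (by rwa [abs_neg])
      (by linarith [lt_of_le_of_ne (not_lt.mp hpos) hx0])
    rwa [cot_neg, abs_neg, abs_neg] at this
  rw [abs_of_pos hpos] at hx ⊢
  have htan : x < tan x := lt_tan hpos hx
  rw [cot_eq_inv_tan, abs_of_pos (inv_pos.mpr (hpos.trans htan))]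
  exact inv_anti₀ hpos htan.le

lemma two_mul_sin_mul_sum_cos (x : ℝ) (m : ℕ) :
    2 * sin x * ∑ k ∈ Icc 1 m, cos (2 * k * x) = sin ((2 * m + 1) * x) - sin x := by
  induction m with
  | zero => simp
  | succ m ih =>
    rw [sum_Icc_succ_top (by omega), mul_add, ih, two_mul_sin_mul_cos]
    have h₁ : x - 2 * ((m + 1 : ℕ) : ℝ) * x = -((2 * m + 1) * x) := by push_cast; ring
    have h₂ : x + 2 * ((m + 1 : ℕ) : ℝ) * x = (2 * ((m + 1 : ℕ) : ℝ) + 1) * x := by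
      push_cast; ring
    rw [h₁, h₂, sin_neg]
    ring

lemma cot_mul_sin_two_mul {x : ℝ} (hx : sin x ≠ 0) (w : ℕ) :
    cot x * sin (2 * w * x) = 2 * ∑ k ∈ Icc 1 w, cos (2 * k * x) + 1 - cos (2 * w * x) := by
  have htel := two_mul_sin_mul_sum_cos x w
  rw [add_mul, one_mul, sin_add] at htel
  rw [cot_eq_cos_div_sin, div_mul_eq_mul_div, div_eq_iff hx]
  linear_combination -htel

end Real

variable {N : ℕ}

lemma not_natCast_dvd_of_mem_Icc {n : ℕ} (hn : n ∈ Icc 1 (N - 1)) : ¬ (N : ℤ) ∣ n := by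
  have := mem_Icc.mp hn
  exact Int.natCast_dvd_natCast.not.mpr (Nat.not_dvd_of_pos_of_lt (by omega) (by omega))

lemma sin_pi_mul_div_ne_zero (hN : 0 < N) {a : ℤ} (ha : ¬ (N : ℤ) ∣ a) :
    sin (π * a / N) ≠ 0 := by
  rw [Ne, sin_eq_zero_iff]
  rintro ⟨n, hn⟩
  rw [eq_div_iff (by positivity)] at hn
  have : (a : ℝ) = N * n := by
    apply mul_left_cancel₀ pi_ne_zero
    linear_combination -hn
  exact ha ⟨n, by exact_mod_cast this⟩

lemma cot_pi_mul_div_eq_of_modEq {a b : ℤ} (h : a ≡ b [ZMOD N]) :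
    cot (π * a / N) = cot (π * b / N) := by
  rcases N.eq_zero_or_pos with rfl | hN
  · simp
  obtain ⟨k, hk⟩ := h.symm.dvd
  have : π * a / N = π * b / N + k * π := by
    rw [show (a : ℝ) = b + N * k by exact_mod_cast (by omega : a = b + N * k)]
    field_simp
  rw [this, cot_add_int_mul_pi]

lemma cot_pi_mul_div_eq_neg_of_modEq {a b : ℤ} (h : a ≡ -b [ZMOD N]) :
    cot (π * a / N) = -cot (π * b / N) := by
  rw [cot_pi_mul_div_eq_of_modEq h, Int.cast_neg, mul_neg, neg_div, cot_neg]

lemma abs_cot_pi_mul_div_le {a b : ℤ} (hab : a ≡ b [ZMOD N]) (hb : b ≠ 0)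
    (hbN : 2 * |b| < N) :
    |cot (π * a / N)| ≤ N / (π * |(b : ℝ)|) := by
  have hN : (0 : ℝ) < N := by exact_mod_cast (by have := abs_nonneg b; omega : 0 < N)
  have hbN' : 2 * |(b : ℝ)| < N := by exact_mod_cast hbN
  have hb' : 0 < |(b : ℝ)| := by positivity
  rw [cot_pi_mul_div_eq_of_modEq hab]
  refine (abs_cot_le_inv_abs (by positivity) ?_).trans_eq ?_
  · rw [abs_div, abs_mul, abs_of_pos pi_pos, abs_of_pos hN, div_lt_iff₀ hN]
    nlinarith [pi_pos]
  · rw [abs_div, abs_mul, abs_of_pos pi_pos, abs_of_pos hN, inv_div]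

lemma sum_cos_two_pi_mul_div (hN : 0 < N) (c : ℤ) :
    ∑ z ∈ Icc 1 (N - 1), cos (2 * π * c * z / N)
      = (if (N : ℤ) ∣ c then (N : ℝ) else 0) - 1 := by
  split_ifs with h
  · obtain ⟨d, rfl⟩ := h
    have hone : ∀ z ∈ Icc 1 (N - 1), cos (2 * π * ((N * d : ℤ) : ℝ) * z / N) = 1 := by
      intro z _
      rw [show 2 * π * ((N * d : ℤ) : ℝ) * z / N = ((d * z : ℤ) : ℝ) * (2 * π) by
        push_cast; field_simp]
      exact cos_int_mul_two_pi _
    rw [sum_congr rfl hone, sum_const, Nat.card_Icc, nsmul_eq_mul, mul_one]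
    simp [Nat.cast_sub (show 1 ≤ N from hN)]
  · set x := π * c / N
    have htel := two_mul_sin_mul_sum_cos x (N - 1)
    rw [show (2 * ((N - 1 : ℕ) : ℝ) + 1) * x = -x + c * (2 * π) by
      simp only [x]; push_cast [Nat.cast_sub (by omega : 1 ≤ N)]; field_simp; ring,
      sin_add_int_mul_two_pi, sin_neg] at htel
    have hsum : ∑ k ∈ Icc 1 (N - 1), cos (2 * k * x) = -1 := by
      apply mul_left_cancel₀ (mul_ne_zero two_ne_zero (sin_pi_mul_div_ne_zero hN h))
      linear_combination htel
    rw [zero_sub, ← hsum]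
    exact sum_congr rfl fun z _ => congrArg cos (by simp only [x]; ring)

lemma sum_sin_mul_sin (hN : 0 < N) (a b : ℤ) :
    ∑ z ∈ Icc 1 (N - 1), sin (2 * π * a * z / N) * sin (2 * π * b * z / N)
      = N / 2 * ((if (N : ℤ) ∣ a - b then 1 else 0)
          - if (N : ℤ) ∣ a + b then 1 else 0) := by
  have hprod : ∀ z : ℕ, sin (2 * π * a * z / N) * sin (2 * π * b * z / N)
      = (cos (2 * π * ((a - b : ℤ) : ℝ) * z / N)
          - cos (2 * π * ((a + b : ℤ) : ℝ) * z / N)) / 2 := by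
    intro z
    rw [eq_div_iff two_ne_zero, mul_comm, ← mul_assoc, two_mul_sin_mul_sin]
    push_cast
    ring_nf
  simp_rw [hprod, ← sum_div, sum_sub_distrib, sum_cos_two_pi_mul_div hN]
  split_ifs <;> ring

lemma sum_cot_mul_sin_eq {w : ℕ} (hw : 0 < w) (hwN : w < N) :
    ∑ n ∈ Icc 1 (N - 1), cot (π * n / N) * sin (2 * π * n * w / N) = N - 2 * w := by
  have hN : 0 < N := hw.trans hwN
  have hcos : ∀ k ∈ Icc 1 w, ∑ n ∈ Icc 1 (N - 1), cos (2 * π * k * n / N) = -1 := by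
    intro k hk
    have h := sum_cos_two_pi_mul_div hN k
    rw [if_neg (not_natCast_dvd_of_mem_Icc (by simp only [mem_Icc] at hk ⊢; omega))] at h
    push_cast at h
    linarith
  calc ∑ n ∈ Icc 1 (N - 1), cot (π * n / N) * sin (2 * π * n * w / N)
      = ∑ n ∈ Icc 1 (N - 1),
          (2 * ∑ k ∈ Icc 1 w, cos (2 * π * k * n / N) + 1 - cos (2 * π * w * n / N)) := by
        refine sum_congr rfl fun n hn => ?_
        have hsin := sin_pi_mul_div_ne_zero hN (not_natCast_dvd_of_mem_Icc hn)
        rw [Int.cast_natCast] at hsin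
        rw [show 2 * π * n * w / N = 2 * w * (π * n / N) by ring, cot_mul_sin_two_mul hsin]
        simp only [mul_div_assoc', mul_assoc, mul_left_comm]
    _ = 2 * ∑ k ∈ Icc 1 w, ∑ n ∈ Icc 1 (N - 1), cos (2 * π * k * n / N) + (N - 1)
          - ∑ n ∈ Icc 1 (N - 1), cos (2 * π * w * n / N) := by
        rw [sum_sub_distrib, sum_add_distrib, ← mul_sum, sum_comm]
        simp [Nat.cast_sub (show 1 ≤ N from hN)]
    _ = N - 2 * w := by
        rw [sum_congr rfl hcos, hcos w (by simp only [mem_Icc]; omega), sum_const, Nat.card_Icc,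
          Nat.add_sub_cancel, nsmul_eq_mul]
        ring

lemma fract_div_sub_half_eq_sum (hN : 0 < N) {j : ℤ} (hj : ¬ (N : ℤ) ∣ j) :
    Int.fract ((j : ℝ) / N) - 1 / 2
      = -(1 / (2 * N)) * ∑ n ∈ Icc 1 (N - 1), cot (π * n / N) * sin (2 * π * n * j / N) := by
  obtain ⟨w, hw⟩ : ∃ w : ℕ, (w : ℤ) = j % N :=
    ⟨(j % N).toNat, Int.toNat_of_nonneg (Int.emod_nonneg _ (by omega))⟩
  have hw0 : 0 < w := by
    by_contra! h
    exact hj (Int.dvd_of_emod_eq_zero (by omega))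
  have hwN : w < N := by
    have := Int.emod_lt_of_pos j (by omega : (0 : ℤ) < N)
    omega
  have hsin : ∀ n : ℕ, sin (2 * π * n * j / N) = sin (2 * π * n * w / N) := by
    intro n
    have hj : j = w + N * (j / N) := by linarith [Int.mul_ediv_add_emod j N]
    rw [show (j : ℝ) = w + N * (j / N : ℤ) by exact_mod_cast hj,
      show 2 * π * n * (w + N * (j / N : ℤ)) / N
          = 2 * π * n * w / N + (n * (j / N) : ℤ) * (2 * π) by
        push_cast; field_simp,
      sin_add_int_mul_two_pi]
  simp_rw [Int.fract_div_intCast_eq_div_intCast_mod, ← hw, hsin, sum_cot_mul_sin_eq hw0 hwN]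
  field_simp
  push_cast
  ring

/-- For `N ∣ a` both sides vanish: no `m` qualifies, and `cot (π * a / N) = cos _ / 0 = 0`. -/
lemma sum_ite_dvd_sub_cot (a : ℤ) :
    ∑ m ∈ Icc 1 (N - 1), (if (N : ℤ) ∣ a - m then cot (π * m / N) else 0)
      = cot (π * a / N) := by
  rcases N.eq_zero_or_pos with rfl | hN
  · simp [cot_eq_cos_div_sin]
  obtain ⟨m₀, hm₀⟩ : ∃ m₀ : ℕ, (m₀ : ℤ) = a % N :=
    ⟨(a % N).toNat, Int.toNat_of_nonneg (Int.emod_nonneg _ (by omega))⟩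
  have hm₀N : m₀ < N := by
    have := Int.emod_lt_of_pos a (by omega : (0 : ℤ) < N)
    omega
  have hdvd : ∀ m ∈ Icc 1 (N - 1), (N : ℤ) ∣ a - m ↔ m₀ = m := by
    intro m hm
    have hmN : (m : ℤ) % N = m := Int.emod_eq_of_lt (by omega) (by have := mem_Icc.mp hm; omega)
    rw [← Int.modEq_iff_dvd, Int.ModEq, hmN, ← hm₀]
    exact ⟨fun h => by exact_mod_cast h.symm, fun h => by rw [h]⟩
  rw [sum_congr rfl fun m hm => if_congr (hdvd m hm) rfl rfl, sum_ite_eq,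
    cot_pi_mul_div_eq_of_modEq (hm₀ ▸ Int.mod_modEq a N).symm, Int.cast_natCast]
  split_ifs with h
  · rfl
  · rw [show m₀ = 0 by simp only [mem_Icc] at h; omega]
    simp [cot_eq_cos_div_sin]

lemma sum_sin_mul_fract_sub_half (hN : 0 < N) (a : ℤ) :
    ∑ z ∈ Icc 1 (N - 1), sin (2 * π * a * z / N) * (Int.fract ((z : ℝ) / N) - 1 / 2)
      = -(1 / 2) * cot (π * a / N) := by
  have hexp : ∀ z ∈ Icc 1 (N - 1), Int.fract ((z : ℝ) / N) - 1 / 2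
      = -(1 / (2 * N)) * ∑ m ∈ Icc 1 (N - 1), cot (π * m / N) * sin (2 * π * m * z / N) := by
    intro z hz
    have h := fract_div_sub_half_eq_sum hN (not_natCast_dvd_of_mem_Icc hz)
    push_cast at h
    exact h
  have hsin : ∀ m : ℕ,
      ∑ z ∈ Icc 1 (N - 1), sin (2 * π * a * z / N) * sin (2 * π * m * z / N)
        = N / 2 * ((if (N : ℤ) ∣ a - m then 1 else 0)
            - if (N : ℤ) ∣ -a - m then 1 else 0) := by
    intro m
    have h := sum_sin_mul_sin hN a m
    simp only [show (N : ℤ) ∣ a + m ↔ (N : ℤ) ∣ -a - m by rw [← dvd_neg, neg_add'],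
      Int.cast_natCast] at h
    exact h
  calc ∑ z ∈ Icc 1 (N - 1), sin (2 * π * a * z / N) * (Int.fract ((z : ℝ) / N) - 1 / 2)
      = -(1 / (2 * N)) * ∑ m ∈ Icc 1 (N - 1), cot (π * m / N) *
          ∑ z ∈ Icc 1 (N - 1), sin (2 * π * a * z / N) * sin (2 * π * m * z / N) := by
        rw [sum_congr rfl fun z hz => by rw [hexp z hz]]
        simp_rw [mul_sum]
        rw [sum_comm]
        exact sum_congr rfl fun m _ => sum_congr rfl fun z _ => by ring
    _ = -(1 / 4) * (∑ m ∈ Icc 1 (N - 1), (if (N : ℤ) ∣ a - m then cot (π * m / N) else 0)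
          - ∑ m ∈ Icc 1 (N - 1), (if (N : ℤ) ∣ -a - m then cot (π * m / N) else 0)) := by
        simp_rw [hsin, ← sum_sub_distrib, mul_sum]
        refine sum_congr rfl fun m _ => ?_
        field_simp
        split_ifs <;> ring
    _ = -(1 / 2) * cot (π * a / N) := by
        rw [sum_ite_dvd_sub_cot, sum_ite_dvd_sub_cot, Int.cast_neg, mul_neg, neg_div, cot_neg]
        ring

theorem sum_fract_sub_half_mul_fract_sub_half {κ : ℕ} (hκ : κ.Coprime N) :
    ∑ z ∈ Icc 1 (N - 1),
        (Int.fract ((κ : ℝ) * z / N) - 1 / 2) * (Int.fract ((z : ℝ) / N) - 1 / 2)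
      = 1 / (4 * N) * ∑ n ∈ Icc 1 (N - 1), cot (π * n / N) * cot (π * (n * κ) / N) := by
  rcases N.eq_zero_or_pos with rfl | hN
  · simp
  have hexp : ∀ z ∈ Icc 1 (N - 1), Int.fract ((κ : ℝ) * z / N) - 1 / 2
      = -(1 / (2 * N)) *
          ∑ n ∈ Icc 1 (N - 1), cot (π * n / N) * sin (2 * π * (n * κ) * z / N) := by
    intro z hz
    have hndvd : ¬ (N : ℤ) ∣ (κ * z : ℕ) := by
      rw [Int.natCast_dvd_natCast, hκ.symm.dvd_mul_left, ← Int.natCast_dvd_natCast]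
      exact not_natCast_dvd_of_mem_Icc hz
    have h := fract_div_sub_half_eq_sum hN hndvd
    push_cast at h
    rw [h]
    congr 1
    exact sum_congr rfl fun n _ => by ring_nf
  calc ∑ z ∈ Icc 1 (N - 1),
        (Int.fract ((κ : ℝ) * z / N) - 1 / 2) * (Int.fract ((z : ℝ) / N) - 1 / 2)
      = -(1 / (2 * N)) * ∑ n ∈ Icc 1 (N - 1), cot (π * n / N) * ∑ z ∈ Icc 1 (N - 1),
          sin (2 * π * (n * κ) * z / N) * (Int.fract ((z : ℝ) / N) - 1 / 2) := by
        rw [sum_congr rfl fun z hz => by rw [hexp z hz]]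
        simp_rw [mul_sum, sum_mul]
        rw [sum_comm]
        exact sum_congr rfl fun n _ => sum_congr rfl fun z _ => by ring
    _ = 1 / (4 * N) * ∑ n ∈ Icc 1 (N - 1), cot (π * n / N) * cot (π * (n * κ) / N) := by
        have h := fun n : ℕ => sum_sin_mul_fract_sub_half hN (n * κ)
        push_cast at h
        simp_rw [h, mul_sum]
        exact sum_congr rfl fun n _ => by ring

lemma sum_Icc_eq_two_mul_sum_Icc_half (hN : Odd N) {f : ℕ → ℝ}
    (hf : ∀ n ∈ Icc 1 (N - 1), f (N - n) = f n) :
    ∑ n ∈ Icc 1 (N - 1), f n = 2 * ∑ n ∈ Icc 1 ((N - 1) / 2), f n := by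
  obtain ⟨M, rfl⟩ := hN
  have hsplit : Icc 1 (2 * M + 1 - 1) = Icc 1 M ∪ Icc (M + 1) (2 * M) := by
    ext n
    simp only [mem_Icc, mem_union]
    omega
  have hreflect : ∑ n ∈ Icc (M + 1) (2 * M), f n = ∑ n ∈ Icc 1 M, f n := by
    refine sum_nbij' (fun n => 2 * M + 1 - n) (fun n => 2 * M + 1 - n) ?_ ?_ ?_ ?_ ?_
    all_goals simp only [mem_Icc]
    · intros; omega
    · intros; omega
    · intros; omega
    · intros; omega
    · intro n hn
      exact (hf n (by simp only [mem_Icc]; omega)).symm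
  rw [hsplit, sum_union (disjoint_left.mpr fun n h₁ h₂ => by
      simp only [mem_Icc] at h₁ h₂; omega), hreflect,
    show (2 * M + 1 - 1) / 2 = M by omega]
  ring

lemma Jq_eq_sum_cot_mul_cot (hN : Odd N) {κ : ℕ} (hκ : κ.Coprime N) :
    Jq N κ 1 = 1 / (2 * N * (N - 1)) *
      ∑ q ∈ Icc 1 ((N - 1) / 2), cot (π * q / N) * cot (π * (q * κ) / N) := by
  have hreflect : ∀ n ∈ Icc 1 (N - 1),
      cot (π * ↑(N - n) / N) * cot (π * (↑(N - n) * κ) / N)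
        = cot (π * n / N) * cot (π * (n * κ) / N) := by
    intro n hn
    have hsub : ((N - n : ℕ) : ℤ) = N - n := by have := mem_Icc.mp hn; omega
    have h₁ := cot_pi_mul_div_eq_neg_of_modEq (N := N) (a := (N - n : ℕ)) (b := n)
      (Int.modEq_iff_dvd.mpr ⟨-1, by rw [hsub]; ring⟩)
    have h₂ := cot_pi_mul_div_eq_neg_of_modEq (N := N) (a := (N - n : ℕ) * κ) (b := n * κ)
      (Int.modEq_iff_dvd.mpr ⟨-κ, by rw [hsub]; ring⟩)
    push_cast at h₁ h₂
    rw [h₁, h₂, neg_mul_neg]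
  rw [Jq, Nat.cast_one, sum_congr rfl fun z _ => by rw [one_mul],
    sum_fract_sub_half_mul_fract_sub_half hκ, sum_Icc_eq_two_mul_sum_Icc_half hN hreflect]
  generalize ∑ q ∈ Icc 1 ((N - 1) / 2), cot (π * q / N) * cot (π * (q * κ) / N) = S
  simp only [one_div, mul_inv]
  ring

lemma abs_cot_mul_cot_le {q κ : ℕ} {b : ℤ} (hq : q ∈ Icc 1 ((N - 1) / 2))
    (hb : b ≡ q * κ [ZMOD N]) (hb0 : b ≠ 0) (hbN : |b| ≤ ((N : ℤ) - 1) / 2) :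
    |cot (π * q / N) * cot (π * (q * κ) / N)| ≤ N ^ 2 / π ^ 2 * (1 / (q * |(b : ℝ)|)) := by
  have hq' := mem_Icc.mp hq
  have h₁ := abs_cot_pi_mul_div_le (N := N) (Int.ModEq.refl (q : ℤ)) (by omega)
    (by rw [abs_of_nonneg (by positivity)]; omega)
  have h₂ := abs_cot_pi_mul_div_le hb.symm hb0 (by omega)
  push_cast at h₁ h₂
  rw [Nat.abs_cast] at h₁
  calc |cot (π * q / N) * cot (π * (q * κ) / N)|
        ≤ N / (π * q) * (N / (π * |(b : ℝ)|)) := by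
        rw [abs_mul]
        exact mul_le_mul h₁ h₂ (abs_nonneg _) (by positivity)
    _ = _ := by field_simp

/-- `|J_{N;κ,1}| ≤ (1/(2π²))·(N/(N-1))·(T_N(κ) + 10π² ln N/(9N))`. -/
theorem abs_Jq_le (N : ℕ) (hN : N.Prime) (hN3 : 3 ≤ N)
    (κ : ℕ) (hκ : κ ∈ Finset.Icc 1 (N - 1))
    (r : ℤ → ℤ) (hr : ∀ j : ℤ, r j ≡ j [ZMOD (N : ℤ)] ∧ |r j| ≤ ((N : ℤ) - 1) / 2) :
    |Jq N κ 1| ≤ (1 / (2 * π ^ 2)) * ((N : ℝ) / ((N : ℝ) - 1)) *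
      (TN N r κ + 10 * π ^ 2 * Real.log N / (9 * N)) := by
  have hκN : ¬ (N : ℤ) ∣ κ := not_natCast_dvd_of_mem_Icc hκ
  have hN1 : (0 : ℝ) < N - 1 := by
    have : (1 : ℝ) < N := by exact_mod_cast (by omega : 1 < N)
    linarith
  have hsum : |∑ q ∈ Icc 1 ((N - 1) / 2), cot (π * q / N) * cot (π * (q * κ) / N)|
      ≤ N ^ 2 / π ^ 2 * TN N r κ := by
    rw [TN, mul_sum]
    refine (abs_sum_le_sum_abs _ _).trans (sum_le_sum fun q hq => ?_)
    refine abs_cot_mul_cot_le hq (hr _).1 (fun h0 => ?_) (hr _).2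
    have hdvd := (hr (q * κ)).1.dvd
    rw [h0, sub_zero] at hdvd
    exact (Int.Prime.dvd_mul' hN hdvd).elim
      (not_natCast_dvd_of_mem_Icc (by simp only [mem_Icc] at hq ⊢; omega)) hκN
  have herr : 0 ≤ 10 * π ^ 2 * Real.log N / (9 * N) := by
    have := Real.log_natCast_nonneg N
    positivity
  rw [Jq_eq_sum_cot_mul_cot (hN.odd_of_ne_two (by omega))
    (Nat.Coprime.symm (hN.coprime_iff_not_dvd.mpr (Int.natCast_dvd_natCast.not.mp hκN))),
    abs_mul, abs_of_pos (by positivity)]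
  calc 1 / (2 * N * (N - 1)) *
        |∑ q ∈ Icc 1 ((N - 1) / 2), cot (π * q / N) * cot (π * (q * κ) / N)|
      ≤ 1 / (2 * N * (N - 1)) * (N ^ 2 / π ^ 2 * TN N r κ) := by gcongr
    _ = 1 / (2 * π ^ 2) * (N / (N - 1)) * TN N r κ := by field_simp
    _ ≤ _ := by gcongr; exact le_add_of_nonneg_right herr
end
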